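/- arXiv:2112.07476 — 3 statements merged into one kernel-verified Lean document; each statement's English description precedes it below -/
import Mathlib

section
/- For 0 < q < 1 and a ∈ ℝ, the vector ξ⁺ = Σ_{p=0}^{n} (−i q^{−(a+n)})^p √((q^{2n}; q^{-2})_p / ((−1)^p (q^{-2}; q^{-2})_p)) ξ_p in ℂ^{n+1} (standard orthonormal basis ξ_p) has squared norm ‖ξ⁺‖² = (−q^{−2a}; q^{-2})_n, where (x; q^{-2})_n = ∏_{j=0}^{n-1}(1 − q^{-2j} x). -/
/-- q-Pochhammer symbol (x; r)_p = ∏_{j=0}^{p-1} (1 - r^j x). -/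
def qPoch (x r : ℝ) (p : ℕ) : ℝ := ∏ j ∈ Finset.range p, (1 - r ^ j * x)

/-!
With `r = q⁻²`, `s = q^(-2a)` and `y = rⁿ = q^(-2n)`, the squared modulus of the `p`-th coordinate
of `ξ⁺` is `(s y)ᵖ (y⁻¹; r)_p / ((-1)ᵖ (r; r)_p) = sᵖ r^(p choose 2) [n choose p]_r`, so the identity
is the q-binomial theorem `∑ₚ r^(p choose 2) [n choose p]_r sᵖ = (-s; r)ₙ`, proved by induction on
`n` from the q-Pascal rule.
-/

open Finset

/-- `r ^ (p choose 2)` times the Gaussian binomial coefficient `[n choose p]_r`. -/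
def qBinomScaled {K : Type*} [Field K] (r : K) (n p : ℕ) : K :=
  ∏ j ∈ range p, (r ^ n - r ^ j) / (r ^ (j + 1) - 1)

section QBinomial

variable {K : Type*} [Field K] (r : K)

@[simp]
theorem qBinomScaled_zero_right (n : ℕ) : qBinomScaled r n 0 = 1 := by
  simp [qBinomScaled]

theorem qBinomScaled_succ_self (n : ℕ) : qBinomScaled r n (n + 1) = 0 :=
  prod_eq_zero (self_mem_range_succ n) (by simp)

theorem qBinomScaled_succ_succ {m : ℕ} (hr : ∀ j ≤ m, r ^ (j + 1) ≠ 1) (n : ℕ) :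
    qBinomScaled r (n + 1) (m + 1) =
      r ^ (m + 1) * qBinomScaled r n (m + 1) + r ^ m * qBinomScaled r n m := by
  have hden : ∀ j ≤ m, r ^ (j + 1) - 1 ≠ 0 := fun j hj => sub_ne_zero.2 (hr j hj)
  have hD : ∏ j ∈ range m, (r ^ (j + 1) - 1) ≠ 0 :=
    prod_ne_zero_iff.2 fun j hj => hden j (mem_range.1 hj).le
  have hnum : ∏ j ∈ range (m + 1), (r ^ (n + 1) - r ^ j) =
      (r ^ (n + 1) - 1) * (r ^ m * ∏ j ∈ range m, (r ^ n - r ^ j)) := by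
    have hfactor : ∀ j, r ^ (n + 1) - r ^ (j + 1) = r * (r ^ n - r ^ j) := fun j => by ring
    rw [prod_range_succ', pow_zero, mul_comm]
    simp only [hfactor, prod_mul_distrib, prod_const, card_range]
  simp only [qBinomScaled, prod_div_distrib, hnum, prod_range_succ]
  have hm := hden m le_rfl
  field_simp
  ring

theorem sum_qBinomScaled_mul_pow (n : ℕ) (hr : ∀ j < n, r ^ (j + 1) ≠ 1) (s : K) :
    ∑ p ∈ range (n + 1), qBinomScaled r n p * s ^ p = ∏ j ∈ range n, (1 + r ^ j * s) := by
  induction n generalizing s with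
  | zero => simp
  | succ n ih =>
    set f : ℕ → K := fun p => qBinomScaled r n p * (r * s) ^ p with hf
    have htop : ∑ p ∈ range (n + 2), f p = ∑ p ∈ range (n + 1), f p := by
      simp only [hf, sum_range_succ _ (n + 1), qBinomScaled_succ_self, zero_mul, add_zero]
    have hpascal : ∀ p ∈ range (n + 1),
        qBinomScaled r (n + 1) (p + 1) * s ^ (p + 1) = f (p + 1) + s * f p := by
      intro p hp
      rw [qBinomScaled_succ_succ r (fun j hj => hr j (hj.trans_lt (mem_range.1 hp)))]
      simp only [hf, mul_pow]
      ring
    have hshift : ∏ j ∈ range (n + 1), (1 + r ^ j * s) =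
        (1 + s) * ∏ j ∈ range n, (1 + r ^ j * (r * s)) := by
      rw [prod_range_succ', mul_comm]
      simp only [pow_succ, pow_zero, one_mul, mul_assoc]
    calc ∑ p ∈ range (n + 1 + 1), qBinomScaled r (n + 1) p * s ^ p
        = ∑ p ∈ range (n + 1), (f (p + 1) + s * f p) + 1 := by
          rw [sum_range_succ', sum_congr rfl hpascal, qBinomScaled_zero_right, pow_zero, one_mul]
      _ = (∑ p ∈ range (n + 1), f (p + 1) + f 0) + s * ∑ p ∈ range (n + 1), f p := by
          simp only [hf, sum_add_distrib, qBinomScaled_zero_right, pow_zero, mul_one, mul_sum]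
          ring
      _ = ∏ j ∈ range (n + 1), (1 + r ^ j * s) := by
          rw [← sum_range_succ', htop, hshift, ih (fun j hj => hr j (by omega))]
          ring

theorem qBinomScaled_nonneg {R : Type*} [Field R] [LinearOrder R] [IsStrictOrderedRing R]
    {r : R} (hr : 1 ≤ r) {n p : ℕ} (hp : p ≤ n) : 0 ≤ qBinomScaled r n p :=
  prod_nonneg fun _ hj => div_nonneg
    (sub_nonneg.2 (pow_le_pow_right₀ hr ((mem_range.1 hj).trans_le hp).le))
    (sub_nonneg.2 (one_le_pow₀ hr))

end QBinomial

theorem pow_mul_qPoch_div_qPoch {r x : ℝ} {n : ℕ} (hx : r ^ n * x = 1) (p : ℕ) :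
    (r ^ n) ^ p * (qPoch x r p / ((-1) ^ p * qPoch r r p)) = qBinomScaled r n p := by
  calc (r ^ n) ^ p * (qPoch x r p / ((-1) ^ p * qPoch r r p))
      = (∏ _j ∈ range p, r ^ n) * (∏ j ∈ range p, (1 - r ^ j * x)) /
          ∏ j ∈ range p, -(1 - r ^ j * r) := by
        rw [prod_const, prod_neg, card_range, qPoch, qPoch, mul_div_assoc]
    _ = qBinomScaled r n p := by
        rw [← prod_mul_distrib, ← prod_div_distrib]
        refine prod_congr rfl fun j _ => ?_
        congr 1
        · linear_combination (-r ^ j) * hx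
        · ring

/-- The squared norm of the eigenvector
ξ⁺ = Σ_p (−i q^{−(a+n)})^p √((q^{2n}; q^{-2})_p / ((−1)^p (q^{-2}; q^{-2})_p)) ξ_p
equals (−q^{−2a}; q^{-2})_n. -/
theorem stmt11 (q a : ℝ) (hq0 : 0 < q) (hq1 : q < 1) (n : ℕ)
    (ξ : Fin (n + 1) → ℂ)
    (hξ : ∀ p : Fin (n + 1), ξ p =
      (-Complex.I * ((q ^ (-(a + (n : ℝ))) : ℝ) : ℂ)) ^ (p : ℕ) *
        ((Real.sqrt (qPoch (q ^ (2 * n)) ((q ^ 2)⁻¹) (p : ℕ) /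
          ((-1 : ℝ) ^ (p : ℕ) * qPoch ((q ^ 2)⁻¹) ((q ^ 2)⁻¹) (p : ℕ))) : ℝ) : ℂ)) :
    ∑ p : Fin (n + 1), Complex.normSq (ξ p) = qPoch (-(q ^ (-2 * a))) ((q ^ 2)⁻¹) n := by
  set r : ℝ := (q ^ 2)⁻¹
  set s : ℝ := q ^ (-2 * a)
  have hr : 1 < r := one_lt_inv₀ (by positivity) |>.2 (pow_lt_one₀ hq0.le hq1 two_ne_zero)
  have hx : r ^ n * q ^ (2 * n) = 1 := by
    rw [pow_mul, ← mul_pow, inv_mul_cancel₀ (by positivity), one_pow]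
  have hc : q ^ (-(a + (n : ℝ))) * q ^ (-(a + (n : ℝ))) = s * r ^ n := by
    rw [← Real.rpow_add hq0, show -(a + (n : ℝ)) + -(a + n) = -2 * a + -((2 * n : ℕ) : ℝ) by
      push_cast; ring, Real.rpow_add hq0, Real.rpow_neg hq0.le, Real.rpow_natCast, pow_mul,
      inv_pow]
  have hterm : ∀ p : Fin (n + 1), Complex.normSq (ξ p) = qBinomScaled r n p * s ^ (p : ℕ) := by
    intro p
    have hcoeff := pow_mul_qPoch_div_qPoch hx p
    have hnonneg := nonneg_of_mul_nonneg_right (hcoeff ▸ qBinomScaled_nonneg hr.le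
      (Nat.lt_succ_iff.1 p.isLt)) (by positivity)
    simp only [hξ, map_mul, map_pow, Complex.normSq_neg, Complex.normSq_I,
      one_mul, Complex.normSq_ofReal, hc, Real.mul_self_sqrt hnonneg, ← hcoeff]
    ring
  rw [Fintype.sum_congr _ _ hterm, Fin.sum_univ_eq_sum_range (fun p => qBinomScaled r n p * s ^ p),
    sum_qBinomScaled_mul_pow r n (fun j _ => (one_lt_pow₀ hr (Nat.succ_ne_zero j)).ne') s, qPoch]
  simp only [mul_neg, sub_neg_eq_add]
end

section
/- For 0 < q < 1, a ∈ ℝ, n ∈ ℕ, one has the q-binomial identity Σ_{p=0}^{n} q^{−2p(a+n)} · (q^{2n}; q^{-2})_p / ((−1)^p (q^{-2}; q^{-2})_p) · q^{n−2p} = (q^{a+n} + q^{−a−n})/(q^a + q^{−a}) · (−q^{−2a}; q^{-2})_n, expressing that ⟨ξ⁺, K ξ⁺⟩/‖ξ⁺‖² = (q^{a+n}+q^{−a−n})/(q^a+q^{−a}) for the eigenvector ξ⁺ and K acting diagonally by q^{n−2p}. -/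
/-!
Write r = q⁻² and u = q^(-2a). The coefficients (r⁻ⁿ; r)_p / (r; r)_p obey a q-Pascal recurrence
in n, which gives the terminating q-binomial theorem
Σ_p (r⁻ⁿ; r)_p / (r; r)_p z^p = (r⁻ⁿ z; r)_n by induction. At z = -u r^(n+1) the left-hand side
of the identity becomes q^n (-u r; r)_n, and (1 + u) (-u r; r)_n = (1 + rⁿ u) (-u; r)_n since both
equal (-u; r)_(n+1). Multiplying numerator and denominator of the prefactor by q^(-a) shows that
it is q^n (1 + rⁿ u) / (1 + u).
-/

section qPochhammer

variable {x r u : ℝ} {m n p : ℕ}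

@[simp] lemma qPoch_zero (x r : ℝ) : qPoch x r 0 = 1 := rfl

lemma qPoch_succ (x r : ℝ) (p : ℕ) : qPoch x r (p + 1) = qPoch x r p * (1 - r ^ p * x) :=
  Finset.prod_range_succ _ _

lemma qPoch_succ' (x r : ℝ) (p : ℕ) : qPoch x r (p + 1) = (1 - x) * qPoch (r * x) r p := by
  simp only [qPoch, Finset.prod_range_succ', pow_zero, one_mul, pow_succ, mul_assoc]
  ring

lemma qPoch_ne_zero_of_le (h : qPoch x r m ≠ 0) (hpm : p ≤ m) : qPoch x r p ≠ 0 := by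
  rw [qPoch, Finset.prod_ne_zero_iff] at h ⊢
  exact fun j hj => h j (Finset.range_subset_range.mpr hpm hj)

lemma qPoch_self_ne_zero_of_one_lt (hr : 1 < r) (n : ℕ) : qPoch r r n ≠ 0 := by
  rw [qPoch, Finset.prod_ne_zero_iff]
  intro j _
  rw [← pow_succ, sub_ne_zero]
  exact (one_lt_pow₀ hr j.succ_ne_zero).ne

lemma qPoch_inv_pow_succ_self (hr : r ≠ 0) (n : ℕ) : qPoch (r ^ n)⁻¹ r (n + 1) = 0 := by
  rw [qPoch_succ, mul_inv_cancel₀ (pow_ne_zero n hr), sub_self, mul_zero]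

lemma qPoch_inv_pow_pascal (hr : r ≠ 0) (hQ : qPoch r r (p + 1) ≠ 0) :
    qPoch (r ^ (n + 1))⁻¹ r (p + 1) / qPoch r r (p + 1) =
      qPoch (r ^ n)⁻¹ r (p + 1) / qPoch r r (p + 1) -
        (r ^ (n + 1))⁻¹ * (qPoch (r ^ n)⁻¹ r p / qPoch r r p) := by
  have hshift : r * (r ^ (n + 1))⁻¹ = (r ^ n)⁻¹ := by
    field_simp; ring
  have hQp : qPoch r r p ≠ 0 := qPoch_ne_zero_of_le hQ p.le_succ
  rw [qPoch_succ' (r ^ (n + 1))⁻¹, hshift, qPoch_succ (r ^ n)⁻¹, qPoch_succ r] at *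
  have hlast : 1 - r ^ p * r ≠ 0 := right_ne_zero_of_mul hQ
  field_simp
  ring

theorem sum_qPoch_inv_pow_div_qPoch_mul_pow (hr : r ≠ 0) (hn : qPoch r r n ≠ 0) (z : ℝ) :
    ∑ p ∈ Finset.range (n + 1), qPoch (r ^ n)⁻¹ r p / qPoch r r p * z ^ p =
      qPoch ((r ^ n)⁻¹ * z) r n := by
  induction n with
  | zero => simp [qPoch]
  | succ n ih =>
    have hpascal : ∀ p ∈ Finset.range (n + 1),
        qPoch (r ^ (n + 1))⁻¹ r (p + 1) / qPoch r r (p + 1) * z ^ (p + 1) =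
          qPoch (r ^ n)⁻¹ r (p + 1) / qPoch r r (p + 1) * z ^ (p + 1) -
            (r ^ (n + 1))⁻¹ * z * (qPoch (r ^ n)⁻¹ r p / qPoch r r p * z ^ p) := fun p hp => by
      rw [qPoch_inv_pow_pascal hr (qPoch_ne_zero_of_le hn (by simpa using hp))]
      ring
    have htail : ∑ p ∈ Finset.range (n + 1),
          qPoch (r ^ n)⁻¹ r (p + 1) / qPoch r r (p + 1) * z ^ (p + 1) =
        ∑ p ∈ Finset.range (n + 1), qPoch (r ^ n)⁻¹ r p / qPoch r r p * z ^ p - 1 := by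
      have h := Finset.sum_range_succ' (fun p => qPoch (r ^ n)⁻¹ r p / qPoch r r p * z ^ p) (n + 1)
      rw [Finset.sum_range_succ, qPoch_inv_pow_succ_self hr] at h
      simp only [qPoch_zero, zero_div, zero_mul, add_zero, div_one, pow_zero, mul_one] at h
      linarith
    have hshift : r * ((r ^ (n + 1))⁻¹ * z) = (r ^ n)⁻¹ * z := by
      field_simp; ring
    rw [Finset.sum_range_succ', Finset.sum_congr rfl hpascal, Finset.sum_sub_distrib,
      ← Finset.mul_sum, htail, ih (qPoch_ne_zero_of_le hn n.le_succ), qPoch_succ' _ r, hshift,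
      qPoch_zero, qPoch_zero, div_one, pow_zero]
    ring

lemma sum_qPoch_div_neg_one_pow_mul_pow (hr : r ≠ 0) (hn : qPoch r r n ≠ 0) (hu : 1 + u ≠ 0) :
    ∑ p ∈ Finset.range (n + 1),
        qPoch (r ^ n)⁻¹ r p / ((-1) ^ p * qPoch r r p) * (u * r ^ (n + 1)) ^ p =
      (1 + r ^ n * u) / (1 + u) * qPoch (-u) r n := by
  have hterm : ∀ p ∈ Finset.range (n + 1),
      qPoch (r ^ n)⁻¹ r p / ((-1) ^ p * qPoch r r p) * (u * r ^ (n + 1)) ^ p =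
        qPoch (r ^ n)⁻¹ r p / qPoch r r p * (-(u * r ^ (n + 1))) ^ p := fun p _ => by
    simp only [neg_pow (u * r ^ (n + 1)), div_eq_mul_inv, mul_inv, ← inv_pow, inv_neg, inv_one]
    ring
  have hz : (r ^ n)⁻¹ * -(u * r ^ (n + 1)) = r * -u := by
    field_simp; ring
  have hshift := (qPoch_succ' (-u) r n).symm.trans (qPoch_succ (-u) r n)
  rw [Finset.sum_congr rfl hterm, sum_qPoch_inv_pow_div_qPoch_mul_pow hr hn, hz,
    div_mul_eq_mul_div, eq_div_iff hu]
  linear_combination hshift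

end qPochhammer

lemma rpow_add_natCast_add_rpow_neg_div {q : ℝ} (hq : 0 < q) (a : ℝ) (n : ℕ) :
    (q ^ (a + (n : ℝ)) + q ^ (-(a + (n : ℝ)))) / (q ^ a + q ^ (-a)) =
      q ^ n * (1 + ((q ^ 2)⁻¹) ^ n * q ^ (-2 * a)) / (1 + q ^ (-2 * a)) := by
  have hqa : 0 < q ^ a := Real.rpow_pos_of_pos hq a
  have hu : q ^ (-2 * a) = ((q ^ a) ^ 2)⁻¹ := by
    rw [mul_comm, Real.rpow_mul hq.le, Real.rpow_neg hqa.le, Real.rpow_two]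
  have hr : ((q ^ 2)⁻¹) ^ n = ((q ^ n) ^ 2)⁻¹ := by
    rw [inv_pow, ← pow_mul, ← pow_mul, mul_comm]
  rw [Real.rpow_neg hq.le, Real.rpow_neg hq.le, Real.rpow_add hq, Real.rpow_natCast, hu, hr]
  field_simp

lemma rpow_mul_rpow_eq_pow_mul_pow {q : ℝ} (hq : 0 < q) (a : ℝ) (n p : ℕ) :
    q ^ (-2 * (p : ℝ) * (a + n)) * q ^ ((n : ℝ) - 2 * p) =
      q ^ n * (q ^ (-2 * a) * ((q ^ 2)⁻¹) ^ (n + 1)) ^ p := by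
  rw [← Real.rpow_two, ← Real.rpow_neg hq.le, ← Real.rpow_natCast (q ^ (-2 : ℝ)),
    ← Real.rpow_mul hq.le, ← Real.rpow_add hq (-2 * a), ← Real.rpow_natCast _ p,
    ← Real.rpow_mul hq.le, ← Real.rpow_natCast q n, ← Real.rpow_add hq, ← Real.rpow_add hq]
  congr 1
  push_cast
  ring

/-- The q-binomial identity
Σ_{p=0}^{n} q^{−2p(a+n)} (q^{2n}; q^{-2})_p / ((−1)^p (q^{-2}; q^{-2})_p) q^{n−2p}
= (q^{a+n} + q^{−a−n})/(q^a + q^{−a}) · (−q^{−2a}; q^{-2})_n. -/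
theorem stmt12 (q a : ℝ) (hq0 : 0 < q) (hq1 : q < 1) (n : ℕ) :
    ∑ p ∈ Finset.range (n + 1),
      q ^ (-2 * (p : ℝ) * (a + (n : ℝ))) *
        (qPoch (q ^ (2 * n)) ((q ^ 2)⁻¹) p /
          ((-1 : ℝ) ^ p * qPoch ((q ^ 2)⁻¹) ((q ^ 2)⁻¹) p)) *
        q ^ ((n : ℝ) - 2 * (p : ℝ)) =
      (q ^ (a + (n : ℝ)) + q ^ (-(a + (n : ℝ)))) / (q ^ a + q ^ (-a)) *
        qPoch (-(q ^ (-2 * a))) ((q ^ 2)⁻¹) n := by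
  have hr : 1 < (q ^ 2)⁻¹ := (one_lt_inv₀ (by positivity)).mpr (by nlinarith)
  have hterm : ∀ p ∈ Finset.range (n + 1),
      q ^ (-2 * (p : ℝ) * (a + n)) *
          (qPoch (q ^ (2 * n)) (q ^ 2)⁻¹ p / ((-1) ^ p * qPoch (q ^ 2)⁻¹ (q ^ 2)⁻¹ p)) *
          q ^ ((n : ℝ) - 2 * p) =
        q ^ n * (qPoch (((q ^ 2)⁻¹) ^ n)⁻¹ (q ^ 2)⁻¹ p /
          ((-1) ^ p * qPoch (q ^ 2)⁻¹ (q ^ 2)⁻¹ p) * (q ^ (-2 * a) * ((q ^ 2)⁻¹) ^ (n + 1)) ^ p) :=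
    fun p _ => by
      rw [mul_right_comm, rpow_mul_rpow_eq_pow_mul_pow hq0, inv_pow (q ^ 2) n, inv_inv, ← pow_mul]
      ring
  rw [Finset.sum_congr rfl hterm, ← Finset.mul_sum,
    sum_qPoch_div_neg_one_pow_mul_pow (by positivity) (qPoch_self_ne_zero_of_one_lt hr n)
      (by positivity), rpow_add_natCast_add_rpow_neg_div hq0]
  ring
end

section
/- Let H be a Hopf *-algebra with bijective antipode S, B a right coideal *-subalgebra, and B⁺ = B ∩ ker ε. Then S(H B⁺)* = H B⁺, i.e. the left ideal H B⁺ is invariant under the anti-linear map a ↦ S(a)*. -/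
/-!
The map θ = star ∘ S is a ring endomorphism of `H` (both `S` and `star` reverse products), and
`H B⁺` is the left ideal generated by `B⁺`, so it suffices to show θ(B⁺) ⊆ H B⁺; since θ is
involutive, θ(H B⁺) ⊆ H B⁺ is then an equality.

For `b ∈ B⁺` write `Δb = ∑ b₍₁₎ ⊗ b₍₂₎` with `b₍₁₎ ∈ B`. The counit and antipode axioms give
`b = ∑ ε(b₍₁₎) b₍₂₎` and `∑ b₍₁₎ S(b₍₂₎) = ε(b) = 0`, hence
`θ(b) = ∑ θ(b₍₂₎) (ε(b₍₁₎)* - b₍₁₎*)`. Each factor `ε(b₍₁₎)* - b₍₁₎*` lies in `B⁺`, because `B` is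
`*`-invariant and `ε` commutes with `*`, which follows from `ε ∘ S = ε` and `ε ∘ θ = * ∘ ε`.
-/

theorem Submodule.span_mul_left_eq_restrictScalars_ideal_span {R A : Type*} [CommSemiring R]
    [Semiring A] [Algebra R A] (S : Set A) :
    span R {x | ∃ a : A, ∃ b ∈ S, x = a * b} = (Ideal.span S).restrictScalars R := by
  refine le_antisymm (span_le.2 ?_) fun x hx => ?_
  · rintro _ ⟨a, b, hb, rfl⟩
    exact Ideal.mul_mem_left _ a (Ideal.subset_span hb)
  induction hx using span_induction with
  | mem y hy => exact subset_span ⟨1, y, hy, (one_mul y).symm⟩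
  | zero => exact zero_mem _
  | add u v _ _ hu hv => exact add_mem hu hv
  | smul c u hu' hu =>
    clear hu'
    induction hu using span_induction with
    | mem y hy =>
      obtain ⟨a, b, hb, rfl⟩ := hy
      exact subset_span ⟨c * a, b, hb, by rw [smul_eq_mul, mul_assoc]⟩
    | zero => rw [smul_zero]; exact zero_mem _
    | add v w _ _ hv hw => rw [smul_add]; exact add_mem hv hw
    | smul r v _ hv => rw [smul_comm]; exact smul_mem _ r hv

theorem Ideal.map_span_le_span {A : Type*} [Semiring A] (f : A →+* A) {S : Set A}
    (hS : ∀ s ∈ S, f s ∈ Ideal.span S) : (Ideal.span S).map f ≤ Ideal.span S := by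
  rw [Ideal.map_span, Ideal.span_le]
  rintro _ ⟨s, hs, rfl⟩
  exact hS s hs

theorem Coalgebra.exists_repr_left_mem {R A : Type*} [CommSemiring R] [AddCommMonoid A]
    [Module R A] [Coalgebra R A] {M : Submodule R A} {a : A}
    (ha : Coalgebra.comul (R := R) a ∈
      LinearMap.range (_root_.TensorProduct.map M.subtype (LinearMap.id : A →ₗ[R] A))) :
    ∃ 𝓡 : Coalgebra.Repr R a (M × A), ∀ i ∈ 𝓡.index, 𝓡.left i ∈ M := by
  obtain ⟨t, ht⟩ := ha
  obtain ⟨s, rfl⟩ := TensorProduct.exists_finset t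
  refine ⟨⟨s, fun p => p.1, fun p => p.2, ?_⟩, fun p _ => p.1.2⟩
  simp [← ht, map_sum]

namespace HopfAlgebra

open Coalgebra

section Semiring

variable (R H : Type*) [CommSemiring R] [Semiring H] [HopfAlgebra R H] [StarRing H]

def starAntipode : H →+* H where
  toFun a := star (antipode R a)
  map_one' := by simp
  map_mul' a b := by simp [antipode_mul_antidistrib]
  map_zero' := by simp
  map_add' a b := by simp

variable {R H}

@[simp] theorem starAntipode_apply (a : H) : starAntipode R H a = star (antipode R a) := rfl

theorem counit_star [Star R] (hinv : Function.Involutive (starAntipode R H))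
    (hε : ∀ a, counit (R := R) (starAntipode R H a) = star (counit (R := R) a)) (a : H) :
    counit (R := R) (star a) = star (counit (R := R) a) := by
  have : star a = antipode R (starAntipode R H a) := by
    rw [← star_star (antipode R _), ← starAntipode_apply, hinv]
  rw [this, counit_antipode, hε]

end Semiring

variable {R H ι : Type*} [CommRing R] [Star R] [Ring H] [HopfAlgebra R H] [StarRing H]

theorem starAntipode_mem_span_of_counit_eq_zero {B : Subalgebra R H}
    (hBstar : ∀ b ∈ B, star b ∈ B)
    (hε : ∀ a : H, counit (R := R) (star a) = star (counit (R := R) a))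
    {b : H} (𝓡 : Repr R b ι) (h𝓡 : ∀ i ∈ 𝓡.index, 𝓡.left i ∈ B) (hεb : counit (R := R) b = 0) :
    starAntipode R H b ∈ Ideal.span {c | c ∈ B ∧ counit (R := R) c = 0} := by
  set c : ι → H := fun i => star (algebraMap R H (counit (𝓡.left i))) - star (𝓡.left i)
  have hc : ∀ i ∈ 𝓡.index, c i ∈ B ∧ counit (R := R) (c i) = 0 := fun i hi =>
    ⟨B.sub_mem (hBstar _ (B.algebraMap_mem _)) (hBstar _ (h𝓡 i hi)),
      by simp only [c, map_sub, hε, Bialgebra.counit_algebraMap, sub_self]⟩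
  have hcancel : ∑ i ∈ 𝓡.index, starAntipode R H (𝓡.right i) * star (𝓡.left i) = 0 := by
    simpa [hεb] using congr(star $(sum_mul_antipode_eq_algebraMap_counit 𝓡))
  have hexpand : starAntipode R H b =
      ∑ i ∈ 𝓡.index, starAntipode R H (𝓡.right i) * star (algebraMap R H (counit (𝓡.left i))) := by
    conv_lhs => rw [← sum_counit_smul 𝓡]
    simp only [map_sum, starAntipode_apply, LinearMap.map_smul]
    simp only [Algebra.smul_def, star_mul]
  have hsum : starAntipode R H b = ∑ i ∈ 𝓡.index, starAntipode R H (𝓡.right i) * c i := by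
    simp only [c, mul_sub, Finset.sum_sub_distrib, ← hexpand, hcancel, sub_zero]
  rw [hsum]
  exact Ideal.sum_mem _ fun i hi => Ideal.mul_mem_left _ _ (Ideal.subset_span (hc i hi))

end HopfAlgebra

theorem stmt17_general {H : Type*} [Ring H] [HopfAlgebra ℂ H] [StarRing H]
    (B : Subalgebra ℂ H) (hBstar : ∀ b ∈ B, star b ∈ B)
    (hB : ∀ b ∈ B, Coalgebra.comul (R := ℂ) b ∈
      LinearMap.range (TensorProduct.map B.toSubmodule.subtype (LinearMap.id : H →ₗ[ℂ] H)))
    (θ : H → H) (hθ : ∀ a, θ a = star (HopfAlgebra.antipode (R := ℂ) a))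
    (hθθ : ∀ a, θ (θ a) = a)
    (hθε : ∀ a, Coalgebra.counit (R := ℂ) (θ a) = star (Coalgebra.counit (R := ℂ) a))
    (Bplus : Set H) (hBplus : Bplus = {b | b ∈ B ∧ Coalgebra.counit (R := ℂ) b = 0})
    (J : Submodule ℂ H)
    (hJ : J = Submodule.span ℂ {x | ∃ a : H, ∃ b ∈ Bplus, x = a * b}) :
    θ '' (J : Set H) = (J : Set H) := by
  obtain rfl : θ = HopfAlgebra.starAntipode ℂ H := funext hθ
  subst hJ
  have hmaps : ∀ x ∈ Ideal.span Bplus, HopfAlgebra.starAntipode ℂ H x ∈ Ideal.span Bplus := by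
    subst hBplus
    refine fun x hx => Ideal.map_span_le_span _ ?_ (Ideal.mem_map_of_mem _ hx)
    rintro b ⟨hb, hεb⟩
    obtain ⟨𝓡, h𝓡⟩ := Coalgebra.exists_repr_left_mem (hB b hb)
    exact HopfAlgebra.starAntipode_mem_span_of_counit_eq_zero hBstar
      (HopfAlgebra.counit_star hθθ hθε) 𝓡 h𝓡 hεb
  rw [Submodule.span_mul_left_eq_restrictScalars_ideal_span, Submodule.coe_restrictScalars]
  exact (Set.image_subset_iff.2 hmaps).antisymm fun x hx => ⟨_, hmaps x hx, hθθ x⟩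

/-- For a Hopf *-algebra H with right coideal *-subalgebra B, the left ideal
HB⁺ (B⁺ = B ∩ ker ε) is invariant under the involutive algebra homomorphism
θ : a ↦ S(a)*, i.e. S(HB⁺)* = HB⁺. -/
theorem stmt17 {H : Type*} [Ring H] [HopfAlgebra ℂ H] [StarRing H]
    (B : Subalgebra ℂ H) (hBstar : ∀ b ∈ B, star b ∈ B)
    (hB : ∀ b ∈ B, Coalgebra.comul (R := ℂ) b ∈
      LinearMap.range (TensorProduct.map B.toSubmodule.subtype (LinearMap.id : H →ₗ[ℂ] H)))
    (θ : H → H) (hθ : ∀ a, θ a = star (HopfAlgebra.antipode (R := ℂ) a))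
    (hθmul : ∀ a b, θ (a * b) = θ a * θ b) (hθθ : ∀ a, θ (θ a) = a)
    (hθε : ∀ a, Coalgebra.counit (R := ℂ) (θ a) = star (Coalgebra.counit (R := ℂ) a))
    (Bplus : Set H) (hBplus : Bplus = {b | b ∈ B ∧ Coalgebra.counit (R := ℂ) b = 0})
    (J : Submodule ℂ H)
    (hJ : J = Submodule.span ℂ {x | ∃ a : H, ∃ b ∈ Bplus, x = a * b}) :
    θ '' (J : Set H) = (J : Set H) :=
  stmt17_general B hBstar hB θ hθ hθθ hθε Bplus hBplus J hJ
end
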